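/- Let P ⊂ ℝ^n be a lattice polytope and Z a smallest maximal Minkowski decomposition in P, written as a sum of primitive segments with distinct primitive direction vectors v₁, …, v_m (each possibly with multiplicity). Then m ≤ 2^n − 1. -/

import Mathlib

/-!
Reduction modulo 2 sends the directions to the 2ⁿ − 1 nonzero classes of (ℤ/2)ⁿ, since a
primitive vector is not divisible by 2. It is injective on a smallest decomposition: if
vᵢ ≡ vⱼ (mod 2), then vᵢ + vⱼ = g • u with u primitive and g ≥ 2, and replacing one copy each of
[0, vᵢ] and [0, vⱼ] by two copies of [0, u] gives a decomposition of the same length inside the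
old one, because [0, u] + [0, u] ⊆ [0, vᵢ + vⱼ] ⊆ [0, vᵢ] + [0, vⱼ]. The inclusion is strict:
the maximum of a linear form φ on a zonotope is the sum of the positive parts of φ on the
generators, and a φ vanishing on vᵢ + vⱼ but not on vᵢ loses |φ vᵢ| in the replacement.
-/

open Pointwise

/-- The real point corresponding to a lattice point. -/
def coeV {n : ℕ} (v : Fin n → ℤ) : Fin n → ℝ := fun i => (v i : ℝ)

/-- A vector in `ℤ^n` is primitive if the gcd of its coordinates is `1`. -/
def IsPrim {n : ℕ} (v : Fin n → ℤ) : Prop := Finset.univ.gcd v = 1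

/-- The zonotope with base lattice point `A` obtained as the Minkowski sum of the
lattice segments `[0, v i]`. -/
def Zono {n L : ℕ} (A : Fin n → ℤ) (v : Fin L → Fin n → ℤ) : Set (Fin n → ℝ) :=
  ({coeV A} : Set (Fin n → ℝ)) + ∑ i, segment ℝ 0 (coeV (v i))

/-- `P` contains (a translate of) a Minkowski sum of `L` primitive lattice segments. -/
def IsDecomp {n : ℕ} (P : Set (Fin n → ℝ)) (L : ℕ) : Prop :=
  ∃ (A : Fin n → ℤ) (v : Fin L → Fin n → ℤ), (∀ i, IsPrim (v i)) ∧ Zono A v ⊆ P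

/-- `L` is the Minkowski length of `P`. -/
def MinkLen {n : ℕ} (P : Set (Fin n → ℝ)) (L : ℕ) : Prop :=
  IsDecomp P L ∧ ∀ M, IsDecomp P M → M ≤ L

/-- `P` is a lattice polytope: the convex hull of a nonempty finite set of lattice points. -/
def IsLatticePolytope {n : ℕ} (P : Set (Fin n → ℝ)) : Prop :=
  ∃ S : Finset (Fin n → ℤ), S.Nonempty ∧ P = convexHull ℝ (coeV '' ↑S)

/-- `Zono A v` is a smallest maximal Minkowski decomposition in `P`: it realizes the
Minkowski length of `P` and is minimal with respect to inclusion among all maximal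
decompositions in `P`. -/
def IsSmallestMax {n L : ℕ} (P : Set (Fin n → ℝ)) (A : Fin n → ℤ)
    (v : Fin L → Fin n → ℤ) : Prop :=
  (∀ i, IsPrim (v i)) ∧ Zono A v ⊆ P ∧ MinkLen P L ∧
    ∀ (B : Fin n → ℤ) (w : Fin L → Fin n → ℤ), (∀ i, IsPrim (w i)) →
      Zono B w ⊆ P → Zono B w ⊆ Zono A v → Zono B w = Zono A v

/-- The zonotope `A + c₁[0,v₁] + ⋯ + c_m[0,v_m]` with multiplicities `c i`. -/
def ZonoM {n m : ℕ} (A : Fin n → ℤ) (c : Fin m → ℕ) (v : Fin m → Fin n → ℤ) :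
    Set (Fin n → ℝ) :=
  ({coeV A} : Set (Fin n → ℝ)) + ∑ i, (c i : ℝ) • segment ℝ 0 (coeV (v i))

section Segments

variable {E : Type*} [AddCommGroup E] [Module ℝ E]

lemma IsGreatest.add {α : Type*} [AddCommMonoid α] [PartialOrder α] [IsOrderedAddMonoid α]
    {s t : Set α} {a b : α} (hs : IsGreatest s a) (ht : IsGreatest t b) :
    IsGreatest (s + t) (a + b) :=
  ⟨Set.add_mem_add hs.1 ht.1, add_mem_upperBounds_add hs.2 ht.2⟩

lemma isGreatest_finsetSum {ι α : Type*} [AddCommMonoid α] [PartialOrder α]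
    [IsOrderedAddMonoid α] (s : Finset ι) {S : ι → Set α} {a : ι → α}
    (h : ∀ k ∈ s, IsGreatest (S k) (a k)) : IsGreatest (∑ k ∈ s, S k) (∑ k ∈ s, a k) := by
  classical
  induction s using Finset.induction_on with
  | empty => exact isGreatest_singleton
  | insert k s hk ih =>
    rw [Finset.sum_insert hk, Finset.sum_insert hk]
    exact IsGreatest.add (h k (s.mem_insert_self k))
      (ih fun l hl => h l (Finset.mem_insert_of_mem hl))

lemma isGreatest_image_segment_zero (φ : E →ₗ[ℝ] ℝ) (x : E) :
    IsGreatest (φ '' segment ℝ 0 x) (max 0 (φ x)) := by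
  have := image_segment ℝ φ.toAffineMap 0 x
  simp only [LinearMap.coe_toAffineMap, map_zero] at this
  rw [this, segment_eq_uIcc]
  exact isGreatest_Icc inf_le_sup

lemma isGreatest_image_sum_segment_zero {ι : Type*} [Fintype ι] (φ : E →ₗ[ℝ] ℝ) (x : ι → E) :
    IsGreatest (φ '' ∑ k, segment ℝ 0 (x k)) (∑ k, max 0 (φ (x k))) := by
  rw [Set.image_finsetSum]
  exact isGreatest_finsetSum _ fun k _ => isGreatest_image_segment_zero φ (x k)

lemma mem_segment_zero_iff {x z : E} :
    z ∈ segment ℝ 0 x ↔ ∃ θ ∈ Set.Icc (0 : ℝ) 1, θ • x = z := by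
  simp [segment_eq_image]

lemma segment_add_segment_subset {t : ℝ} (ht₀ : 0 ≤ t) (ht : 2 * t ≤ 1) (x y : E) :
    segment ℝ 0 (t • (x + y)) + segment ℝ 0 (t • (x + y)) ⊆ segment ℝ 0 x + segment ℝ 0 y := by
  rintro _ ⟨a, ha, b, hb, rfl⟩
  obtain ⟨α, ⟨hα₀, hα₁⟩, rfl⟩ := mem_segment_zero_iff.mp ha
  obtain ⟨β, ⟨hβ₀, hβ₁⟩, rfl⟩ := mem_segment_zero_iff.mp hb
  have hθ : (α + β) * t ∈ Set.Icc (0 : ℝ) 1 := ⟨by positivity, by nlinarith⟩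
  refine ⟨((α + β) * t) • x, mem_segment_zero_iff.mpr ⟨_, hθ, rfl⟩,
    ((α + β) * t) • y, mem_segment_zero_iff.mpr ⟨_, hθ, rfl⟩, ?_⟩
  simp only [smul_add, smul_smul, add_mul, add_smul]
  abel

end Segments

lemma Convex.natCast_smul_eq_nsmul {𝕜 E : Type*} [Field 𝕜] [LinearOrder 𝕜]
    [IsStrictOrderedRing 𝕜] [AddCommGroup E] [Module 𝕜 E] {s : Set E} (hs : Convex 𝕜 s)
    (hne : s.Nonempty) (k : ℕ) :
    (k : 𝕜) • s = k • s := by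
  induction k with
  | zero => simpa using Set.zero_smul_set hne
  | succ k ih =>
    rw [Nat.cast_succ, hs.add_smul k.cast_nonneg zero_le_one, one_smul, ih, succ_nsmul]

section PairReplacement

variable {ι : Type*} [Fintype ι] [DecidableEq ι] {p q : ι}

lemma exists_sum_eq_add_add_of_eq_off_pair {M : Type*} [AddCommMonoid M] (hpq : p ≠ q)
    {f g : ι → M} (hfg : ∀ k, k ≠ p → k ≠ q → f k = g k) :
    ∃ r, ∑ k, f k = f p + f q + r ∧ ∑ k, g k = g p + g q + r := by
  have hsplit (h : ι → M) : ∑ k, h k = h p + h q + ∑ k ∈ {p, q}ᶜ, h k := by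
    rw [← Finset.sum_pair hpq, Finset.sum_add_sum_compl]
  refine ⟨∑ k ∈ {p, q}ᶜ, g k, ?_, hsplit g⟩
  rw [hsplit f]
  congr 1
  refine Finset.sum_congr rfl fun k hk => ?_
  simp only [Finset.mem_compl, Finset.mem_insert, Finset.mem_singleton, not_or] at hk
  exact hfg k hk.1 hk.2

variable {E : Type*} [AddCommGroup E] [Module ℝ E] {x x' : ι → E} {t : ℝ}

lemma sum_segment_subset_of_pair (hpq : p ≠ q) (hp : x' p = t • (x p + x q))
    (hq : x' q = t • (x p + x q)) (hx' : ∀ k, k ≠ p → k ≠ q → x' k = x k)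
    (ht₀ : 0 ≤ t) (ht : 2 * t ≤ 1) :
    ∑ k, segment ℝ 0 (x' k) ⊆ ∑ k, segment ℝ 0 (x k) := by
  obtain ⟨r, hr', hr⟩ := exists_sum_eq_add_add_of_eq_off_pair hpq
    (f := fun k => segment ℝ 0 (x' k)) (g := fun k => segment ℝ 0 (x k))
    fun k hkp hkq => by rw [hx' k hkp hkq]
  rw [hr', hr, hp, hq]
  exact Set.add_subset_add_right (segment_add_segment_subset ht₀ ht _ _)

lemma sum_segment_ne_of_pair (hpq : p ≠ q) (hp : x' p = t • (x p + x q))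
    (hq : x' q = t • (x p + x q)) (hx' : ∀ k, k ≠ p → k ≠ q → x' k = x k)
    (φ : E →ₗ[ℝ] ℝ) (hφ : φ (x p + x q) = 0) (hφp : φ (x p) ≠ 0) :
    ∑ k, segment ℝ 0 (x' k) ≠ ∑ k, segment ℝ 0 (x k) := by
  intro h
  have hmax := (isGreatest_image_sum_segment_zero φ x').unique
    (h ▸ isGreatest_image_sum_segment_zero φ x)
  obtain ⟨r, hr', hr⟩ := exists_sum_eq_add_add_of_eq_off_pair hpq
    (f := fun k => max 0 (φ (x' k))) (g := fun k => max 0 (φ (x k)))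
    fun k hkp hkq => by rw [hx' k hkp hkq]
  have hφq : φ (x q) = - φ (x p) := by rw [map_add] at hφ; linarith
  have hφx' : φ (x' p) = 0 ∧ φ (x' q) = 0 := by
    rw [hp, hq, map_smul, hφ, smul_zero, and_self]
  rw [hr', hr, hφx'.1, hφx'.2, hφq, max_self] at hmax
  rcases hφp.lt_or_gt with hneg | hpos
  · linarith [max_eq_right (neg_pos.mpr hneg).le, le_max_left 0 (φ (x p))]
  · linarith [max_eq_right hpos.le, le_max_left 0 (-φ (x p))]

end PairReplacement

section Lattice

variable {n : ℕ}

lemma coeV_add (v w : Fin n → ℤ) : coeV (v + w) = coeV v + coeV w := by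
  ext k; simp [coeV]

lemma coeV_zsmul (g : ℤ) (v : Fin n → ℤ) : coeV (g • v) = (g : ℝ) • coeV v := by
  ext k; simp [coeV]

lemma IsPrim.intCast_comp_ne_zero {v : Fin n → ℤ} (hv : IsPrim v) {d : ℕ} (hd : d ≠ 1) :
    ((↑) ∘ v : Fin n → ZMod d) ≠ 0 := by
  intro h
  have hdvd : (d : ℤ) ∣ Finset.univ.gcd v := Finset.dvd_gcd fun k _ =>
    (ZMod.intCast_zmod_eq_zero_iff_dvd _ _).mp (congrFun h k)
  rw [hv, Int.natCast_dvd_ofNat, Nat.dvd_one] at hdvd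
  exact hd hdvd

lemma two_dvd_gcd_add_of_intCast_comp_eq {v w : Fin n → ℤ}
    (h : ((↑) ∘ v : Fin n → ZMod 2) = (↑) ∘ w) : 2 ∣ Finset.univ.gcd (v + w) := by
  refine Finset.dvd_gcd fun k _ => ?_
  have hk : (2 : ℤ) ∣ v k - w k :=
    (ZMod.intCast_eq_intCast_iff_dvd_sub _ _ _).mp (congrFun h k).symm
  simpa [two_mul] using hk.add (dvd_mul_right 2 (w k))

lemma gcd_pos_of_ne_zero {s : Fin n → ℤ} (hs : s ≠ 0) : 0 < Finset.univ.gcd s := by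
  refine lt_of_le_of_ne ?_ (Ne.symm fun h => hs ?_)
  · rw [← Finset.normalize_gcd, ← Int.abs_eq_normalize]
    exact abs_nonneg _
  · ext k
    exact Finset.gcd_eq_zero_iff.mp h k (Finset.mem_univ k)

lemma exists_isPrim_gcd_smul_eq {s : Fin n → ℤ} (hs : s ≠ 0) :
    ∃ u, IsPrim u ∧ Finset.univ.gcd s • u = s := by
  obtain ⟨k, hk⟩ := Function.ne_iff.mp hs
  refine ⟨fun k => s k / Finset.univ.gcd s, Finset.gcd_div_eq_one (Finset.mem_univ k) hk, ?_⟩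
  ext l
  exact Int.mul_ediv_cancel' (Finset.gcd_dvd (Finset.mem_univ l))

lemma IsPrim.eq_or_eq_neg_of_mul_eq_mul {u w : Fin n → ℤ} (hu : IsPrim u) (hw : IsPrim w)
    (h : ∀ a b, u a * w b = u b * w a) : w = u ∨ w = -u := by
  obtain ⟨t, ht⟩ := Finset.gcd_eq_sum_mul Finset.univ u
  rw [hu] at ht
  set d := ∑ a, w a * t a
  have hwd : w = fun b => d * u b := by
    ext b
    calc w b = (∑ a, u a * t a) * w b := by rw [← ht, one_mul]
      _ = ∑ a, w a * t a * u b := by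
        rw [Finset.sum_mul]
        exact Finset.sum_congr rfl fun a _ => by linear_combination t a * h a b
      _ = d * u b := by rw [Finset.sum_mul]
  have hd : |d| = 1 := by
    have := Finset.gcd_mul_left (s := Finset.univ) (f := u) (a := d)
    rwa [← hwd, hw, hu, mul_one, ← Int.abs_eq_normalize, eq_comm] at this
  rcases abs_eq zero_le_one |>.mp hd with hd | hd
  · left; ext b; simp [hwd, hd]
  · right; ext b; simp [hwd, hd]

lemma IsPrim.coeV_notMem_span_add {v w : Fin n → ℤ} (hv : IsPrim v) (hw : IsPrim w)
    (hvw : v ≠ w) (hvw' : v ≠ -w) : coeV v ∉ Submodule.span ℝ {coeV (v + w)} := by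
  rw [Submodule.mem_span_singleton]
  rintro ⟨t, ht⟩
  have hcross : ∀ a b, v a * w b = v b * w a := by
    intro a b
    have ha := congrFun ht a
    have hb := congrFun ht b
    simp only [coeV, Pi.smul_apply, Pi.add_apply, Int.cast_add, smul_eq_mul] at ha hb
    have : (v a : ℝ) * w b = v b * w a := by
      linear_combination (-((v b : ℝ) + w b)) * ha + ((v a : ℝ) + w a) * hb
    exact_mod_cast this
  rcases hv.eq_or_eq_neg_of_mul_eq_mul hw hcross with h | h
  · exact hvw h.symm
  · exact hvw' (by rw [h, neg_neg])

lemma exists_linearMap_eq_zero_ne_zero {E : Type*} [AddCommGroup E] [Module ℝ E] {x y : E}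
    (hx : x ∉ Submodule.span ℝ {y}) : ∃ φ : E →ₗ[ℝ] ℝ, φ y = 0 ∧ φ x ≠ 0 := by
  obtain ⟨φ, hφx, hφ⟩ := Submodule.exists_dual_map_eq_bot_of_notMem hx inferInstance
  refine ⟨φ, ?_, hφx⟩
  rw [Submodule.map_span, Submodule.span_eq_bot] at hφ
  exact hφ _ ⟨y, rfl, rfl⟩

end Lattice

section Zonotopes

variable {n : ℕ}

def replicateDirections {m : ℕ} (c : Fin m → ℕ) (v : Fin m → Fin n → ℤ) :
    Fin (∑ i, c i) → Fin n → ℤ :=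
  fun k => v (finSigmaFinEquiv.symm k).1

lemma replicateDirections_finSigmaFinEquiv {m : ℕ} (c : Fin m → ℕ) (v : Fin m → Fin n → ℤ)
    (i : Fin m) (r : Fin (c i)) : replicateDirections c v (finSigmaFinEquiv ⟨i, r⟩) = v i := by
  simp [replicateDirections]

lemma zono_replicateDirections {m : ℕ} (A : Fin n → ℤ) (c : Fin m → ℕ) (v : Fin m → Fin n → ℤ) :
    Zono A (replicateDirections c v) = ZonoM A c v := by
  unfold Zono ZonoM
  congr 1
  rw [← finSigmaFinEquiv.sum_comp, Fintype.sum_sigma]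
  refine Finset.sum_congr rfl fun i _ => ?_
  simp only [replicateDirections_finSigmaFinEquiv, Finset.sum_const, Finset.card_univ,
    Fintype.card_fin]
  exact ((convex_segment _ _).natCast_smul_eq_nsmul ⟨0, left_mem_segment _ _ _⟩ _).symm

lemma zono_update_update_ssubset {L : ℕ} (A : Fin n → ℤ) (w : Fin L → Fin n → ℤ) {p q : Fin L}
    (hpq : p ≠ q) {g : ℤ} (hg : 2 ≤ g) {u : Fin n → ℤ} (hu : g • u = w p + w q)
    (hpar : coeV (w p) ∉ Submodule.span ℝ {coeV (w p + w q)}) :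
    Zono A (Function.update (Function.update w p u) q u) ⊂ Zono A w := by
  set w' := Function.update (Function.update w p u) q u
  have hg₀ : (0 : ℝ) < g := by exact_mod_cast (by omega : (0 : ℤ) < g)
  have hu' : coeV u = (g : ℝ)⁻¹ • (coeV (w p) + coeV (w q)) := by
    rw [← coeV_add, ← hu, coeV_zsmul, smul_smul, inv_mul_cancel₀ hg₀.ne', one_smul]
  have hp : coeV (w' p) = (g : ℝ)⁻¹ • (coeV (w p) + coeV (w q)) := by simp [w', hpq, hu']
  have hq : coeV (w' q) = (g : ℝ)⁻¹ • (coeV (w p) + coeV (w q)) := by simp [w', hu']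
  have hk (k : Fin L) (hkp : k ≠ p) (hkq : k ≠ q) : coeV (w' k) = coeV (w k) := by
    simp [w', hkp, hkq]
  have ht : 2 * (g : ℝ)⁻¹ ≤ 1 := by
    rw [← div_eq_mul_inv, div_le_one hg₀]
    exact_mod_cast hg
  obtain ⟨φ, hφ, hφp⟩ := exists_linearMap_eq_zero_ne_zero hpar
  rw [coeV_add] at hφ
  refine (Set.add_subset_add_left
    (sum_segment_subset_of_pair hpq hp hq hk (by positivity) ht)).ssubset_of_ne fun h => ?_
  rw [Set.singleton_add, Set.singleton_add] at h
  exact sum_segment_ne_of_pair hpq hp hq hk φ hφ hφp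
    (Set.image_injective.mpr (add_right_injective _) h)

end Zonotopes

theorem not_two_dvd_gcd_add_of_smallest {n m : ℕ} {P : Set (Fin n → ℝ)} {A : Fin n → ℤ}
    {c : Fin m → ℕ} {v : Fin m → Fin n → ℤ} (hprim : ∀ i, IsPrim (v i)) (hpos : ∀ i, 0 < c i)
    (hdist : ∀ i j, i ≠ j → v i ≠ v j ∧ v i ≠ -v j) (hsub : ZonoM A c v ⊆ P)
    (hmin : ∀ (B : Fin n → ℤ) (w : Fin (∑ i, c i) → Fin n → ℤ), (∀ k, IsPrim (w k)) →
      Zono B w ⊆ P → Zono B w ⊆ ZonoM A c v → Zono B w = ZonoM A c v)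
    {i j : Fin m} (hij : i ≠ j) : ¬ 2 ∣ Finset.univ.gcd (v i + v j) := by
  intro h2
  have hs : v i + v j ≠ 0 := fun h => (hdist i j hij).2 (eq_neg_of_add_eq_zero_left h)
  obtain ⟨u, hu, hgu⟩ := exists_isPrim_gcd_smul_eq hs
  have hg : 2 ≤ Finset.univ.gcd (v i + v j) := Int.le_of_dvd (gcd_pos_of_ne_zero hs) h2
  set w := replicateDirections c v
  set p := finSigmaFinEquiv (⟨i, ⟨0, hpos i⟩⟩ : Σ k, Fin (c k))
  set q := finSigmaFinEquiv (⟨j, ⟨0, hpos j⟩⟩ : Σ k, Fin (c k))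
  have hwp : w p = v i := replicateDirections_finSigmaFinEquiv c v _ _
  have hwq : w q = v j := replicateDirections_finSigmaFinEquiv c v _ _
  have hpq : p ≠ q := finSigmaFinEquiv.injective.ne fun h => hij (congrArg Sigma.fst h)
  have hpar : coeV (w p) ∉ Submodule.span ℝ {coeV (w p + w q)} := by
    rw [hwp, hwq]
    exact (hprim i).coeV_notMem_span_add (hprim j) (hdist i j hij).1 (hdist i j hij).2
  have hZ := zono_update_update_ssubset A w hpq hg (u := u) (by rw [hwp, hwq, hgu]) hpar
  rw [zono_replicateDirections] at hZ
  refine hZ.ne (hmin A _ (fun k => ?_) (hZ.subset.trans hsub) hZ.subset)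
  rcases eq_or_ne k q with rfl | hkq
  · simpa using hu
  rcases eq_or_ne k p with rfl | hkp
  · simpa [hkq] using hu
  rw [Function.update_of_ne hkq, Function.update_of_ne hkp]
  exact hprim _

theorem stmt8_general {n m : ℕ} (P : Set (Fin n → ℝ))
    (A : Fin n → ℤ) (c : Fin m → ℕ) (v : Fin m → Fin n → ℤ)
    (hprim : ∀ i, IsPrim (v i)) (hpos : ∀ i, 0 < c i)
    (hdist : ∀ i j, i ≠ j → v i ≠ v j ∧ v i ≠ -v j)
    (hsub : ZonoM A c v ⊆ P)
    (hmin : ∀ (B : Fin n → ℤ) (w : Fin (∑ i, c i) → Fin n → ℤ), (∀ k, IsPrim (w k)) →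
      Zono B w ⊆ P → Zono B w ⊆ ZonoM A c v → Zono B w = ZonoM A c v) :
    m ≤ 2 ^ n - 1 := by
  calc m = (Finset.univ : Finset (Fin m)).card := by simp
    _ ≤ (Finset.univ.erase (0 : Fin n → ZMod 2)).card :=
      Finset.card_le_card_of_injOn (fun i => ((↑) ∘ v i : Fin n → ZMod 2))
        (fun i _ => by simpa using (hprim i).intCast_comp_ne_zero (d := 2) (by norm_num))
        fun i _ j _ h => by_contra fun hij =>
          not_two_dvd_gcd_add_of_smallest hprim hpos hdist hsub hmin hij
            (two_dvd_gcd_add_of_intCast_comp_eq h)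
    _ = 2 ^ n - 1 := by simp [Finset.card_erase_of_mem]

/-- A smallest maximal Minkowski decomposition in a lattice polytope `P ⊂ ℝⁿ` has at most
`2ⁿ - 1` distinct primitive direction vectors. -/
theorem stmt8 {n m : ℕ} (P : Set (Fin n → ℝ)) (hP : IsLatticePolytope P)
    (A : Fin n → ℤ) (c : Fin m → ℕ) (v : Fin m → Fin n → ℤ)
    (hprim : ∀ i, IsPrim (v i)) (hpos : ∀ i, 0 < c i)
    (hdist : ∀ i j, i ≠ j → v i ≠ v j ∧ v i ≠ -v j)
    (hsub : ZonoM A c v ⊆ P) (hmax : MinkLen P (∑ i, c i))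
    (hmin : ∀ (B : Fin n → ℤ) (w : Fin (∑ i, c i) → Fin n → ℤ), (∀ k, IsPrim (w k)) →
      Zono B w ⊆ P → Zono B w ⊆ ZonoM A c v → Zono B w = ZonoM A c v) :
    m ≤ 2 ^ n - 1 :=
  stmt8_general P A c v hprim hpos hdist hsub hmin
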